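/- Let σ, γ, c_∞ ≥ 0 with σ, γ > 0, let τ_γ : [0,∞) → [0,∞) be nondecreasing with τ_γ(0) = 0, and let Q_γ be the associated sticky kernel on [0,∞). Then for any w₀ ≥ 0 and q ≥ 1, ∫ |w₁ − τ_γ(w₀) − γc_∞|^q Q_γ(w₀, dw₁) ≤ (4σ²γ)^{q/2} (m_q + 2 sup_{u ≥ 0} u^q Φ(−u)), where m_q is the q-th absolute moment of the standard Gaussian distribution and Φ its CDF. -/

import Mathlib

open MeasureTheory

/-- Standard Gaussian density. -/
noncomputable def stdG (g : ℝ) : ℝ :=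
  (Real.sqrt (2 * Real.pi))⁻¹ * Real.exp (-g ^ 2 / 2)

/-- Standard Gaussian cumulative distribution function. -/
noncomputable def Phi (x : ℝ) : ℝ := ∫ u in Set.Iio x, stdG u

/-- Density of the one-dimensional centered Gaussian with variance `v`. -/
noncomputable def gpdf (v x : ℝ) : ℝ :=
  (Real.sqrt (2 * Real.pi * v))⁻¹ * Real.exp (-x ^ 2 / (2 * v))

/-- `p̄(t, g) = min(1, φ_v(t − √v g)/φ_v(√v g))` with `v = σ²γ`. -/
noncomputable def pbar (σ γ t g : ℝ) : ℝ :=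
  min 1 (gpdf (σ ^ 2 * γ) (t - σ * Real.sqrt γ * g) /
    gpdf (σ ^ 2 * γ) (σ * Real.sqrt γ * g))

/-- The `q`-th absolute moment of the standard Gaussian distribution. -/
noncomputable def gaussMoment (q : ℝ) : ℝ := ∫ g : ℝ, |g| ^ q * stdG g

/-
With `s = σ√γ` and `t = τ(w₀) + γc ≥ 0`, the ratio of Gaussian densities in `p̄` is
`exp(2u(g - u))` for `u = t / (2s)`, so the mass of the atom is at most
`∫_{g<u} φ(g - 2u) dg + ∫_{g≥u} φ = 2Φ(-u)`; since `t^q = (2s)^q u^q`, the atom contributes at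
most `(2s)^q · 2 u^q Φ(-u)`. Off the atom the deviation is `2s|g|`, which contributes at most
`(2s)^q m_q`. Finally `(4σ²γ)^{q/2} = (2s)^q`, and the supremum is finite because
`u^q Φ(-u) ≤ m_q` by Markov's inequality.
-/

open Real Set ProbabilityTheory

lemma stdG_eq_gaussianPDFReal : stdG = gaussianPDFReal 0 1 := by
  ext g
  simp [stdG, gaussianPDFReal]

lemma stdG_nonneg (g : ℝ) : 0 ≤ stdG g := by
  rw [stdG_eq_gaussianPDFReal]; exact gaussianPDFReal_nonneg 0 1 g

lemma integrable_stdG : Integrable stdG := by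
  rw [stdG_eq_gaussianPDFReal]; exact integrable_gaussianPDFReal 0 1

lemma continuous_stdG : Continuous stdG := by
  unfold stdG; fun_prop

lemma stdG_neg (g : ℝ) : stdG (-g) = stdG g := by
  simp only [stdG, neg_sq]

lemma exp_mul_stdG (u g : ℝ) : exp (2 * u * (g - u)) * stdG g = stdG (g - 2 * u) := by
  simp only [stdG]
  rw [mul_left_comm, ← exp_add]
  ring_nf

lemma setIntegral_Iio_stdG_sub (a b : ℝ) :
    ∫ g in Iio b, stdG (g - a) = Phi (b - a) := by
  have := (measurePreserving_sub_right volume a).setIntegral_preimage_emb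
    (measurableEmbedding_subRight a) stdG (Iio (b - a))
  simpa [Phi] using this

lemma setIntegral_Ici_stdG (u : ℝ) : ∫ g in Ici u, stdG g = Phi (-u) := by
  rw [integral_Ici_eq_integral_Ioi, Phi, ← integral_Iic_eq_integral_Iio, ← integral_comp_neg_Ioi]
  simp only [stdG_neg]

lemma integrable_abs_rpow_mul_stdG {q : ℝ} (hq : 0 ≤ q) :
    Integrable fun g : ℝ => |g| ^ q * stdG g := by
  have hf : Integrable fun g : ℝ => g ^ q * stdG g := by
    have := (integrable_rpow_mul_exp_neg_mul_sq (b := 1 / 2) (by norm_num)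
      (by linarith : -1 < q)).const_mul (√(2 * π))⁻¹
    refine this.congr (Filter.Eventually.of_forall fun g => ?_)
    simp only [stdG]; ring_nf
  refine (hf.norm.add hf.comp_neg.norm).mono'
    ((continuous_abs.rpow_const fun _ => Or.inr hq).mul continuous_stdG).aestronglyMeasurable
    (Filter.Eventually.of_forall fun g => ?_)
  rw [norm_of_nonneg (by have := stdG_nonneg g; positivity)]
  rcases le_total 0 g with hg | hg
  · rw [abs_of_nonneg hg]
    exact (le_abs_self _).trans (le_add_of_nonneg_right (norm_nonneg _))
  · rw [abs_of_nonpos hg, ← stdG_neg g]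
    exact (le_abs_self _).trans (le_add_of_nonneg_left (norm_nonneg _))

-- Markov's inequality for `|G| ^ q`, `G` standard Gaussian.
lemma rpow_mul_Phi_neg_le_gaussMoment {q u : ℝ} (hq : 0 ≤ q) (hu : 0 ≤ u) :
    u ^ q * Phi (-u) ≤ gaussMoment q := by
  have hm := integrable_abs_rpow_mul_stdG hq
  calc u ^ q * Phi (-u) = ∫ g in Ici u, u ^ q * stdG g := by
        rw [integral_const_mul, setIntegral_Ici_stdG]
    _ ≤ ∫ g in Ici u, |g| ^ q * stdG g :=
        setIntegral_mono_on (integrable_stdG.const_mul _).integrableOn hm.integrableOn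
          measurableSet_Ici fun g hg => mul_le_mul_of_nonneg_right
            (rpow_le_rpow hu ((mem_Ici.1 hg).trans (le_abs_self g)) hq) (stdG_nonneg g)
    _ ≤ gaussMoment q :=
        setIntegral_le_integral hm (Filter.Eventually.of_forall fun g =>
          mul_nonneg (rpow_nonneg (abs_nonneg g) q) (stdG_nonneg g))

lemma bddAbove_rpow_mul_Phi_neg {q : ℝ} (hq : 0 ≤ q) :
    BddAbove ((fun u : ℝ => u ^ q * Phi (-u)) '' Ici 0) := by
  refine ⟨gaussMoment q, ?_⟩
  rintro _ ⟨u, hu, rfl⟩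
  exact rpow_mul_Phi_neg_le_gaussMoment hq hu

lemma integral_min_one_exp_mul_stdG_le (u : ℝ) :
    ∫ g, min 1 (exp (2 * u * (g - u))) * stdG g ≤ 2 * Phi (-u) := by
  -- Below `u` the exponential tilts `φ` into `φ(· - 2u)`; above `u` the weight is at most `1`.
  have hlow : Integrable ((Iio u).indicator fun g => stdG (g - 2 * u)) :=
    (integrable_stdG.comp_sub_right _).indicator measurableSet_Iio
  have hhigh : Integrable ((Ici u).indicator stdG) := integrable_stdG.indicator measurableSet_Ici
  calc ∫ g, min 1 (exp (2 * u * (g - u))) * stdG g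
      ≤ ∫ g, ((Iio u).indicator (fun g => stdG (g - 2 * u)) g + (Ici u).indicator stdG g) := by
        refine integral_mono_of_nonneg (Filter.Eventually.of_forall fun g => ?_) (hlow.add hhigh)
          (Filter.Eventually.of_forall fun g => ?_)
        · have := stdG_nonneg g; positivity
        rcases lt_or_ge g u with hg | hg
        · simp only [indicator_of_mem (mem_Iio.2 hg), indicator_of_notMem (notMem_Ici.2 hg),
            add_zero, ← exp_mul_stdG]
          exact mul_le_mul_of_nonneg_right (min_le_right _ _) (stdG_nonneg g)
        · simp only [indicator_of_notMem (notMem_Iio.2 hg), indicator_of_mem (mem_Ici.2 hg),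
            zero_add]
          exact mul_le_of_le_one_left (stdG_nonneg g) (min_le_left _ _)
    _ = 2 * Phi (-u) := by
        rw [integral_add hlow hhigh, integral_indicator measurableSet_Iio,
          integral_indicator measurableSet_Ici, setIntegral_Iio_stdG_sub, setIntegral_Ici_stdG]
        ring_nf

lemma pbar_eq_min_exp {σ γ : ℝ} (hσ : 0 < σ) (hγ : 0 < γ) (u g : ℝ) :
    pbar σ γ (2 * σ * √γ * u) g = min 1 (exp (2 * u * (g - u))) := by
  have hK : (√(2 * π * (σ ^ 2 * γ)))⁻¹ ≠ 0 := by positivity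
  have hv : σ ^ 2 * γ = (σ * √γ) ^ 2 := by rw [mul_pow, sq_sqrt hγ.le]
  have hs : √γ ≠ 0 := (sqrt_pos.2 hγ).ne'
  unfold pbar gpdf
  rw [mul_div_mul_left _ _ hK, ← exp_sub, hv]
  congr 2
  field_simp
  ring

lemma pbar_nonneg (σ γ t g : ℝ) : 0 ≤ pbar σ γ t g := by
  unfold pbar gpdf
  positivity

lemma pbar_le_one (σ γ t g : ℝ) : pbar σ γ t g ≤ 1 := min_le_left _ _

lemma integral_pbar_mul_stdG_mul_rpow_le {σ γ q t : ℝ} (hσ : 0 < σ) (hγ : 0 < γ) (hq : 0 ≤ q)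
    (ht : 0 ≤ t) :
    (∫ g, pbar σ γ t g * stdG g) * |0 - t| ^ q ≤
      (2 * σ * √γ) ^ q * (2 * sSup ((fun u : ℝ => u ^ q * Phi (-u)) '' Ici 0)) := by
  have hs : 0 < 2 * σ * √γ := by have := sqrt_pos.2 hγ; positivity
  set u := t / (2 * σ * √γ)
  have hu : 0 ≤ u := by positivity
  have htu : t = 2 * σ * √γ * u := (mul_div_cancel₀ t hs.ne').symm
  have hmass : ∫ g, pbar σ γ t g * stdG g ≤ 2 * Phi (-u) := by
    simpa only [htu, pbar_eq_min_exp hσ hγ] using integral_min_one_exp_mul_stdG_le u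
  have hsup : u ^ q * Phi (-u) ≤ sSup ((fun u : ℝ => u ^ q * Phi (-u)) '' Ici 0) :=
    le_csSup (bddAbove_rpow_mul_Phi_neg hq) ⟨u, hu, rfl⟩
  calc (∫ g, pbar σ γ t g * stdG g) * |0 - t| ^ q ≤ 2 * Phi (-u) * |0 - t| ^ q :=
        mul_le_mul_of_nonneg_right hmass (rpow_nonneg (abs_nonneg _) q)
    _ = (2 * σ * √γ) ^ q * (2 * (u ^ q * Phi (-u))) := by
        rw [zero_sub, abs_neg, abs_of_nonneg ht, htu, mul_rpow hs.le hu]; ring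
    _ ≤ _ := by gcongr

lemma integral_abs_rpow_mul_one_sub_pbar_le {σ γ q : ℝ} (hσ : 0 ≤ σ) (hq : 0 ≤ q) (t : ℝ) :
    ∫ g, |(t - 2 * σ * √γ * g) - t| ^ q * (1 - pbar σ γ t g) * stdG g ≤
      (2 * σ * √γ) ^ q * gaussMoment q := by
  have hs : 0 ≤ 2 * σ * √γ := by positivity
  rw [gaussMoment, ← integral_const_mul]
  refine integral_mono_of_nonneg (Filter.Eventually.of_forall fun g => ?_)
    ((integrable_abs_rpow_mul_stdG hq).const_mul _) (Filter.Eventually.of_forall fun g => ?_)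
  · have := sub_nonneg.2 (pbar_le_one σ γ t g)
    have := stdG_nonneg g
    positivity
  · have hdev : |(t - 2 * σ * √γ * g) - t| ^ q = (2 * σ * √γ) ^ q * |g| ^ q := by
      rw [sub_sub_cancel_left, abs_neg, abs_mul, abs_of_nonneg hs, mul_rpow hs (abs_nonneg g)]
    have hweight : 1 - pbar σ γ t g ≤ 1 := sub_le_self _ (pbar_nonneg σ γ t g)
    dsimp only
    rw [hdev, mul_assoc, mul_assoc]
    gcongr
    exact mul_le_of_le_one_left (stdG_nonneg g) hweight

lemma four_mul_sq_mul_rpow_half {σ γ : ℝ} (hσ : 0 ≤ σ) (hγ : 0 ≤ γ) (q : ℝ) :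
    (4 * σ ^ 2 * γ) ^ (q / 2) = (2 * σ * √γ) ^ q := by
  rw [show 4 * σ ^ 2 * γ = (2 * σ * √γ) ^ 2 by rw [mul_pow, mul_pow, sq_sqrt hγ]; ring,
    ← rpow_natCast, ← rpow_mul (by positivity)]
  ring_nf

theorem sticky_centered_moment_bound_general (σ γ c q : ℝ) (τ : ℝ → ℝ)
    (hσ : 0 < σ) (hγ : 0 < γ) (hc : 0 ≤ c) (hq : 1 ≤ q)
    (hτ0 : ∀ w, 0 ≤ w → 0 ≤ τ w) (w₀ : ℝ) (hw₀ : 0 ≤ w₀) :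
    (∫ g : ℝ, pbar σ γ (τ w₀ + γ * c) g * stdG g) *
        |(0 : ℝ) - (τ w₀ + γ * c)| ^ q +
      (∫ g : ℝ,
        |(τ w₀ + γ * c - 2 * σ * Real.sqrt γ * g) - (τ w₀ + γ * c)| ^ q *
          (1 - pbar σ γ (τ w₀ + γ * c) g) * stdG g)
    ≤ (4 * σ ^ 2 * γ) ^ (q / 2) *
        (gaussMoment q + 2 * sSup ((fun u : ℝ => u ^ q * Phi (-u)) '' Set.Ici 0)) := by
  have hq0 : 0 ≤ q := zero_le_one.trans hq
  have ht : 0 ≤ τ w₀ + γ * c := add_nonneg (hτ0 w₀ hw₀) (mul_nonneg hγ.le hc)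
  rw [four_mul_sq_mul_rpow_half hσ.le hγ.le, mul_add, add_comm ((2 * σ * √γ) ^ q * _)]
  exact add_le_add (integral_pbar_mul_stdG_mul_rpow_le hσ hγ hq0 ht)
    (integral_abs_rpow_mul_one_sub_pbar_le hσ.le hq0 _)

/-- Centered `q`-th moment bound for one step of the sticky kernel `Q_γ` started
at `w₀`: the kernel jumps to `0` with probability `p̄(t, g)` and otherwise moves to
`t − 2σ√γ g`, where `t = τ(w₀) + γ c_∞`. -/
theorem sticky_centered_moment_bound (σ γ c q : ℝ) (τ : ℝ → ℝ)
    (hσ : 0 < σ) (hγ : 0 < γ) (hc : 0 ≤ c) (hq : 1 ≤ q)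
    (hτ0 : ∀ w, 0 ≤ w → 0 ≤ τ w) (hτmono : MonotoneOn τ (Set.Ici (0 : ℝ)))
    (hτzero : τ 0 = 0) (w₀ : ℝ) (hw₀ : 0 ≤ w₀) :
    (∫ g : ℝ, pbar σ γ (τ w₀ + γ * c) g * stdG g) *
        |(0 : ℝ) - (τ w₀ + γ * c)| ^ q +
      (∫ g : ℝ,
        |(τ w₀ + γ * c - 2 * σ * Real.sqrt γ * g) - (τ w₀ + γ * c)| ^ q *
          (1 - pbar σ γ (τ w₀ + γ * c) g) * stdG g)
    ≤ (4 * σ ^ 2 * γ) ^ (q / 2) *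
        (gaussMoment q + 2 * sSup ((fun u : ℝ => u ^ q * Phi (-u)) '' Set.Ici 0)) :=
  sticky_centered_moment_bound_general σ γ c q τ hσ hγ hc hq hτ0 w₀ hw₀
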